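/- arXiv:0812.2839 — 3 statements merged into one kernel-verified Lean document; each statement's English description precedes it below -/
import Mathlib

section
/- Let $Y$ be a nonnegative integrable random variable with quantile function $Q_Y$ (the cadlag inverse of $x \mapsto \mathbb{P}(Y > x)$). Then for any $\alpha \in [0,1]$, $\int_0^{\infty} \min(\sqrt{\alpha}, \sqrt{\mathbb{P}(Y>t)})\,dt = \int_0^{\sqrt{\alpha}} Q_Y(u^2)\,du = \tfrac{1}{2}\int_0^{\alpha} \frac{Q_Y(u)}{\sqrt{u}}\,du$. -/
/-!
Both sides of the first identity are the Lebesgue measure of the region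
`{(t, u) | 0 < t, 0 < u < √α, u ² < P(Y > t)}`. Its slice at fixed `t` is the interval
`(0, min √α √P(Y > t))`; because the tail function `t ↦ P(Y > t)` is right-continuous, its slice
at fixed `u` is the interval `(0, Q(u ²))`. The second identity is the substitution `u ↦ u ²`.
-/

open MeasureTheory Set Filter Topology ProbabilityTheory

theorem toReal_measure_gt_eq_one_sub_cdf {Ω : Type*} [MeasurableSpace Ω] (μ : Measure Ω)
    [IsProbabilityMeasure μ] {Y : Ω → ℝ} (hY : Measurable Y) (t : ℝ) :
    (μ {ω | Y ω > t}).toReal = 1 - cdf (μ.map Y) t := by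
  have := Measure.isProbabilityMeasure_map (μ := μ) hY.aemeasurable
  rw [cdf_eq_real, ← probReal_compl_eq_one_sub measurableSet_Iic, compl_Iic, measureReal_def,
    Measure.map_apply hY measurableSet_Ioi]
  rfl

theorem lt_sInf_setOf_nonneg_le_iff {F : ℝ → ℝ} (hF : Antitone F)
    (hF_right : ∀ t, ContinuousWithinAt F (Ici t) t) (hF_top : Tendsto F atTop (𝓝 0))
    {t v : ℝ} (ht : 0 ≤ t) (hv : 0 < v) :
    t < sInf {x | 0 ≤ x ∧ F x ≤ v} ↔ v < F t := by
  constructor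
  · intro h
    by_contra! hFt
    exact h.not_ge (csInf_le ⟨0, fun x hx => hx.1⟩ ⟨ht, hFt⟩)
  · intro h
    obtain ⟨s, hvs, hts⟩ := (((hF_right t).mono Ioi_subset_Ici_self).eventually
      (lt_mem_nhds h)).and self_mem_nhdsWithin |>.exists
    obtain ⟨x, hxv, hx⟩ := ((hF_top.eventually (gt_mem_nhds hv)).and (eventually_ge_atTop 0)).exists
    refine hts.trans_le (le_csInf ⟨x, hx, hxv.le⟩ fun y hy => ?_)
    by_contra! hys
    exact (hvs.trans_le (hF hys.le)).not_ge hy.2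

theorem setOf_sq_lt_inter_Ioo (c a : ℝ) : {u : ℝ | u ^ 2 < c} ∩ Ioo 0 a = Ioo 0 (min a √c) := by
  ext u
  simp only [mem_inter_iff, mem_ofPred_eq, mem_Ioo, lt_min_iff]
  constructor
  · rintro ⟨hc, hu, ha⟩
    exact ⟨hu, ha, (Real.lt_sqrt hu.le).2 hc⟩
  · rintro ⟨hu, ha, hc⟩
    exact ⟨(Real.lt_sqrt hu.le).1 hc, hu, ha⟩

theorem image_sq_Ioo_zero_sqrt (a : ℝ) : (fun x : ℝ => x ^ 2) '' Ioo 0 √a = Ioo 0 a := by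
  ext y
  simp only [mem_image, mem_Ioo]
  constructor
  · rintro ⟨x, ⟨hx, hxa⟩, rfl⟩
    exact ⟨by positivity, (Real.lt_sqrt hx.le).1 hxa⟩
  · rintro ⟨hy, hya⟩
    exact ⟨√y, ⟨Real.sqrt_pos.2 hy, Real.sqrt_lt_sqrt hy.le hya⟩, Real.sq_sqrt hy.le⟩

theorem integral_Ioo_sqrt_comp_sq {E : Type*} [NormedAddCommGroup E] [NormedSpace ℝ E]
    (g : ℝ → E) (a : ℝ) :
    ∫ x in Ioo 0 √a, (2 * x) • g (x ^ 2) = ∫ y in Ioo 0 a, g y := by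
  have hinj : InjOn (fun x : ℝ => x ^ 2) (Ioo 0 √a) :=
    (pow_left_strictMonoOn₀ two_ne_zero).injOn.mono fun x hx => mem_ofPred.2 hx.1.le
  rw [← image_sq_Ioo_zero_sqrt a, integral_image_eq_integral_abs_deriv_smul measurableSet_Ioo
    (fun x _ => by simpa using (hasDerivAt_pow 2 x).hasDerivWithinAt) hinj]
  refine setIntegral_congr_fun measurableSet_Ioo fun x hx => ?_
  rw [abs_of_pos (by linarith [hx.1])]

theorem lintegral_Ioi_min_sqrt_eq {F : ℝ → ℝ} (hF : Measurable F) (a : ℝ) :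
    ∫⁻ t in Ioi 0, ENNReal.ofReal (min a √(F t)) =
      ∫⁻ u in Ioo 0 a, volume ({t | u ^ 2 < F t} ∩ Ioi 0) := by
  have hE : MeasurableSet {p : ℝ × ℝ | p.2 ^ 2 < F p.1} :=
    measurableSet_lt (by fun_prop) (hF.comp measurable_fst)
  have hprod := (Measure.prod_apply (μ := volume.restrict (Ioi 0))
    (ν := volume.restrict (Ioo 0 a)) hE).symm.trans (Measure.prod_apply_symm hE)
  convert hprod using 3 with t u
  · rw [Measure.restrict_apply (measurable_prodMk_left hE)]
    change _ = volume ({u : ℝ | u ^ 2 < F t} ∩ Ioo 0 a)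
    rw [setOf_sq_lt_inter_Ioo, Real.volume_Ioo, sub_zero]
  · rw [Measure.restrict_apply (measurable_prodMk_right hE)]
    rfl

theorem integral_Ioi_min_sqrt_eq_integral_Ioo {F Q : ℝ → ℝ} (hF : Measurable F)
    (hQ_nonneg : ∀ v, 0 ≤ Q v) (hQF : ∀ t, 0 ≤ t → ∀ v, 0 < v → (t < Q v ↔ v < F t))
    {a : ℝ} (ha : 0 ≤ a) :
    ∫ t in Ioi 0, min a √(F t) = ∫ u in Ioo 0 a, Q (u ^ 2) := by
  have hslice : ∀ v, 0 < v → {t | v < F t} ∩ Ioi 0 = Ioo 0 (Q v) := fun v hv => by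
    ext t
    simp only [mem_inter_iff, mem_ofPred_eq, mem_Ioi, mem_Ioo]
    exact ⟨fun ⟨hvt, ht⟩ => ⟨ht, (hQF t ht.le v hv).2 hvt⟩,
      fun ⟨ht, htQ⟩ => ⟨(hQF t ht.le v hv).1 htQ, ht⟩⟩
  have hQ_anti : AntitoneOn (fun u => Q (u ^ 2)) (Ioo 0 a) := by
    intro u hu w hw huw
    refine le_of_forall_lt fun c hc => ?_
    rcases lt_or_ge c 0 with hc0 | hc0
    · exact hc0.trans_le (hQ_nonneg _)
    · have hw2 := (hQF c hc0 _ (pow_pos hw.1 2)).1 hc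
      exact (hQF c hc0 _ (pow_pos hu.1 2)).2
        ((pow_le_pow_left₀ hu.1.le huw 2).trans_lt hw2)
  rw [integral_eq_lintegral_of_nonneg_ae (Eventually.of_forall fun t => by positivity)
      (by fun_prop),
    integral_eq_lintegral_of_nonneg_ae (Eventually.of_forall fun u => hQ_nonneg _)
      (aemeasurable_restrict_of_antitoneOn measurableSet_Ioo hQ_anti).aestronglyMeasurable,
    lintegral_Ioi_min_sqrt_eq hF]
  congr 1
  refine setLIntegral_congr_fun measurableSet_Ioo fun u hu => ?_
  rw [hslice _ (pow_pos hu.1 2), Real.volume_Ioo, sub_zero]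

theorem min_sqrt_tail_integral_eq_quantile_integrals_general
    {Ω : Type*} [MeasurableSpace Ω] (μ : Measure Ω) [IsProbabilityMeasure μ]
    (Y : Ω → ℝ) (hYmeas : Measurable Y)
    (Q : ℝ → ℝ)
    (hQ : ∀ u, Q u = sInf {x : ℝ | 0 ≤ x ∧ (μ {ω | Y ω > x}).toReal ≤ u})
    (α : ℝ) :
    ((∫ t in Ioi (0:ℝ), min (Real.sqrt α) (Real.sqrt ((μ {ω | Y ω > t}).toReal))) =
        (∫ u in Ioo (0:ℝ) (Real.sqrt α), Q (u ^ 2))) ∧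
      ((∫ u in Ioo (0:ℝ) (Real.sqrt α), Q (u ^ 2)) =
        (1 / 2) * ∫ u in Ioo (0:ℝ) α, Q u / Real.sqrt u) := by
  set F : ℝ → ℝ := fun t => (μ {ω | Y ω > t}).toReal
  have hF : F = fun t => 1 - cdf (μ.map Y) t :=
    funext (toReal_measure_gt_eq_one_sub_cdf μ hYmeas)
  have hF_anti : Antitone F := hF ▸ fun s t hst => sub_le_sub_left ((cdf _).mono hst) 1
  have hF_right : ∀ t, ContinuousWithinAt F (Ici t) t :=
    hF ▸ fun t => continuousWithinAt_const.sub ((cdf _).right_continuous t)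
  have hF_top : Tendsto F atTop (𝓝 0) := by
    simpa [hF] using (tendsto_const_nhds (x := (1 : ℝ))).sub (tendsto_cdf_atTop (μ.map Y))
  have hQF : ∀ t, 0 ≤ t → ∀ v, 0 < v → (t < Q v ↔ v < F t) := fun t ht v hv =>
    hQ v ▸ lt_sInf_setOf_nonneg_le_iff hF_anti hF_right hF_top ht hv
  have hQ_nonneg : ∀ v, 0 ≤ Q v := fun v => hQ v ▸ Real.sInf_nonneg fun x hx => hx.1
  refine ⟨integral_Ioi_min_sqrt_eq_integral_Ioo hF_anti.measurable hQ_nonneg hQF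
    (Real.sqrt_nonneg α), ?_⟩
  rw [← integral_Ioo_sqrt_comp_sq (fun u => Q u / √u) α, ← integral_const_mul]
  refine setIntegral_congr_fun measurableSet_Ioo fun x hx => ?_
  rw [smul_eq_mul, Real.sqrt_sq hx.1.le]
  field_simp [hx.1.ne']

theorem min_sqrt_tail_integral_eq_quantile_integrals
    {Ω : Type*} [MeasurableSpace Ω] (μ : Measure Ω) [IsProbabilityMeasure μ]
    (Y : Ω → ℝ) (hYpos : ∀ ω, 0 ≤ Y ω) (hYmeas : Measurable Y)
    (hYint : Integrable Y μ)
    (Q : ℝ → ℝ)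
    (hQ : ∀ u, Q u = sInf {x : ℝ | 0 ≤ x ∧ (μ {ω | Y ω > x}).toReal ≤ u})
    (α : ℝ) (hα : α ∈ Icc (0:ℝ) 1) :
    ((∫ t in Ioi (0:ℝ), min (Real.sqrt α) (Real.sqrt ((μ {ω | Y ω > t}).toReal))) =
        (∫ u in Ioo (0:ℝ) (Real.sqrt α), Q (u ^ 2))) ∧
      ((∫ u in Ioo (0:ℝ) (Real.sqrt α), Q (u ^ 2)) =
        (1 / 2) * ∫ u in Ioo (0:ℝ) α, Q u / Real.sqrt u) :=
  min_sqrt_tail_integral_eq_quantile_integrals_general μ Y hYmeas Q hQ α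
end

section
/- Let $\gamma \in (0,1)$, $a > 0$ with $a < \frac{1}{2} - \gamma$, and let $\nu$ be a probability measure on $(0,1)$ with density $g$ satisfying $g(x) \le V x^{-\gamma}$ for a constant $V > 0$. Let $f : (0,1) \to \mathbb{R}$ be positive, non-increasing, with $f(x) \le D x^{-a}$. Then $\sum_{k \ge 1} k^{-1/2} \int_0^{\infty} \min(k^{-(1-\gamma)/(2\gamma)}, \sqrt{\nu(\{f > t\})})\,dt < \infty$. -/
open MeasureTheory Set

/-!
Since `f x ≤ D x^(-a)`, the superlevel set `{f > t}` lies in `(0, (D/t)^(1/a))`, whose `ν`-mass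
is at most `V/(1-γ) · (D/t)^((1-γ)/a)` by the density bound; hence `√ν{f > t} ≤ C t^(-p)` with
`p = (1-γ)/(2a) > 1`. With `N = k + 1` and `ρ = (1-γ)/(2γ)`, splitting the `t`-integral of
`min (N^(-ρ)) (C t^(-p))` at `T = N^(ρ/p)` bounds it by a multiple of `N^(ρ/p - ρ)`, so the `k`-th
term is `O(N^((2a-1)/(2γ)))`, which is summable exactly because `a < 1/2 - γ`.
-/

lemma summable_nat_add_one_rpow {e : ℝ} (he : e < -1) :
    Summable (fun k : ℕ => ((k : ℝ) + 1) ^ e) := by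
  have := (summable_nat_add_iff (f := fun n : ℕ => (n : ℝ) ^ e) 1).2 (Real.summable_nat_rpow.2 he)
  simpa only [Nat.cast_add_one] using this

lemma integral_Ioo_zero_rpow {γ u : ℝ} (hγ : γ < 1) (hu : 0 ≤ u) :
    ∫ x in Ioo 0 u, x ^ (-γ) = u ^ (1 - γ) / (1 - γ) := by
  rw [← integral_Ioc_eq_integral_Ioo, ← intervalIntegral.integral_of_le hu,
    integral_rpow (Or.inl (by linarith)), Real.zero_rpow (by linarith), sub_zero, neg_add_eq_sub]

lemma withDensity_Ioo_zero_le_of_le_mul_rpow {g : ℝ → ℝ} {γ V u : ℝ} (hγ : γ < 1) (hV : 0 ≤ V)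
    (hg : ∀ x ∈ Ioo (0:ℝ) 1, g x ≤ V * x ^ (-γ)) (hu : 0 < u) :
    (volume.restrict (Ioo (0:ℝ) 1)).withDensity (fun x => ENNReal.ofReal (g x)) (Ioo 0 u) ≤
      ENNReal.ofReal (V / (1 - γ) * u ^ (1 - γ)) := by
  have hint : IntegrableOn (fun x : ℝ => V * x ^ (-γ)) (Ioo 0 u) :=
    ((intervalIntegral.integrableOn_Ioo_rpow_iff hu).2 (by linarith)).const_mul V
  have hnonneg : 0 ≤ᵐ[volume.restrict (Ioo 0 u)] fun x : ℝ => V * x ^ (-γ) := by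
    filter_upwards [ae_restrict_mem measurableSet_Ioo] with x hx
    exact mul_nonneg hV (Real.rpow_nonneg hx.1.le _)
  rw [withDensity_apply _ measurableSet_Ioo, Measure.restrict_restrict measurableSet_Ioo]
  calc ∫⁻ x in Ioo 0 u ∩ Ioo 0 1, ENNReal.ofReal (g x)
      ≤ ∫⁻ x in Ioo 0 u ∩ Ioo 0 1, ENNReal.ofReal (V * x ^ (-γ)) :=
        setLIntegral_mono' (measurableSet_Ioo.inter measurableSet_Ioo)
          fun x hx => ENNReal.ofReal_le_ofReal (hg x hx.2)
    _ ≤ ∫⁻ x in Ioo 0 u, ENNReal.ofReal (V * x ^ (-γ)) := lintegral_mono_set inter_subset_left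
    _ = ENNReal.ofReal (V / (1 - γ) * u ^ (1 - γ)) := by
        rw [← ofReal_integral_eq_lintegral_ofReal hint hnonneg, integral_const_mul,
          integral_Ioo_zero_rpow hγ hu.le, mul_div_assoc', div_mul_eq_mul_div]

lemma superlevelSet_subset_Ioo_of_le_mul_rpow {f : ℝ → ℝ} {D a t : ℝ} (ha : 0 < a) (ht : 0 < t)
    (hbound : ∀ x ∈ Ioo (0:ℝ) 1, f x ≤ D * x ^ (-a)) :
    {x ∈ Ioo (0:ℝ) 1 | f x > t} ⊆ Ioo 0 ((D / t) ^ a⁻¹) := by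
  rintro x ⟨hx, hfx⟩
  have hxa : x ^ a < D / t := by
    rw [lt_div_iff₀ ht, ← lt_div_iff₀' (Real.rpow_pos_of_pos hx.1 a), div_eq_mul_inv,
      ← Real.rpow_neg hx.1.le]
    exact hfx.trans_le (hbound x hx)
  have hDt : 0 ≤ D / t := (Real.rpow_nonneg hx.1.le a).trans hxa.le
  exact ⟨hx.1, (Real.lt_rpow_inv_iff_of_pos hx.1.le hDt ha).2 hxa⟩

lemma sqrt_withDensity_superlevelSet_le {g f : ℝ → ℝ} {γ a D V t : ℝ} (hγ : γ < 1) (ha : 0 < a)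
    (hD : 0 < D) (hV : 0 ≤ V) (hg : ∀ x ∈ Ioo (0:ℝ) 1, g x ≤ V * x ^ (-γ))
    (hbound : ∀ x ∈ Ioo (0:ℝ) 1, f x ≤ D * x ^ (-a)) (ht : 0 < t) :
    Real.sqrt ((volume.restrict (Ioo (0:ℝ) 1)).withDensity (fun x => ENNReal.ofReal (g x))
        {x ∈ Ioo (0:ℝ) 1 | f x > t}).toReal ≤
      Real.sqrt (V / (1 - γ)) * D ^ ((1 - γ) / (2 * a)) * t ^ (-((1 - γ) / (2 * a))) := by
  have hDt : 0 < D / t := div_pos hD ht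
  have hK : 0 ≤ V / (1 - γ) := div_nonneg hV (by linarith)
  have hmeas := (measure_mono (superlevelSet_subset_Ioo_of_le_mul_rpow ha ht hbound)).trans
    (withDensity_Ioo_zero_le_of_le_mul_rpow hγ hV hg (Real.rpow_pos_of_pos hDt a⁻¹))
  calc _ ≤ Real.sqrt (V / (1 - γ) * ((D / t) ^ a⁻¹) ^ (1 - γ)) :=
        Real.sqrt_le_sqrt (ENNReal.toReal_le_of_le_ofReal (by positivity) hmeas)
    _ = Real.sqrt (V / (1 - γ)) * (D / t) ^ ((1 - γ) / (2 * a)) := by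
        rw [Real.sqrt_mul hK, Real.sqrt_eq_rpow (_ ^ _), ← Real.rpow_mul hDt.le,
          ← Real.rpow_mul hDt.le]
        congr 2
        field_simp
    _ = _ := by rw [Real.div_rpow hD.le ht.le, Real.rpow_neg ht.le, mul_assoc, ← div_eq_mul_inv]

lemma integrableOn_Ioi_min_mul_rpow {M C p : ℝ} (hM : 0 ≤ M) (hC : 0 ≤ C) (hp : 1 < p) :
    IntegrableOn (fun t : ℝ => min M (C * t ^ (-p))) (Ioi 0) := by
  have hmeas : AEStronglyMeasurable (fun t : ℝ => min M (C * t ^ (-p))) volume := by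
    fun_prop
  rw [← Ioc_union_Ioi_eq_Ioi zero_le_one]
  refine IntegrableOn.union ?_ ?_
  · refine Integrable.mono' (integrableOn_const measure_Ioc_lt_top.ne) hmeas.restrict ?_
    filter_upwards [ae_restrict_mem measurableSet_Ioc] with t ht
    rw [Real.norm_of_nonneg (le_min hM (mul_nonneg hC (Real.rpow_nonneg ht.1.le _)))]
    exact min_le_left _ _
  · refine Integrable.mono'
      ((integrableOn_Ioi_rpow_of_lt (by linarith : -p < -1) one_pos).const_mul C)
      hmeas.restrict ?_
    filter_upwards [ae_restrict_mem measurableSet_Ioi] with t ht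
    rw [Real.norm_of_nonneg
      (le_min hM (mul_nonneg hC (Real.rpow_nonneg (zero_le_one.trans ht.le) _)))]
    exact min_le_right _ _

lemma integral_Ioi_min_mul_rpow_le {M C p T : ℝ} (hM : 0 ≤ M) (hC : 0 ≤ C) (hp : 1 < p)
    (hT : 0 < T) :
    ∫ t in Ioi 0, min M (C * t ^ (-p)) ≤ M * T + C / (p - 1) * T ^ (1 - p) := by
  have hint := integrableOn_Ioi_min_mul_rpow hM hC hp
  have hint_tail : IntegrableOn (fun t : ℝ => C * t ^ (-p)) (Ioi T) :=
    (integrableOn_Ioi_rpow_of_lt (by linarith) hT).const_mul C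
  rw [← Ioc_union_Ioi_eq_Ioi hT.le] at hint ⊢
  rw [setIntegral_union (Ioc_disjoint_Ioi le_rfl) measurableSet_Ioi
    (hint.mono_set subset_union_left) (hint.mono_set subset_union_right)]
  have hhead : ∫ t in Ioc 0 T, min M (C * t ^ (-p)) ≤ M * T := by
    refine (setIntegral_mono_on (hint.mono_set subset_union_left)
      (integrableOn_const measure_Ioc_lt_top.ne) measurableSet_Ioc
      fun t _ => min_le_left _ _).trans_eq ?_
    rw [setIntegral_const, measureReal_def, Real.volume_Ioc, ENNReal.toReal_ofReal (by linarith),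
      sub_zero, smul_eq_mul, mul_comm]
  have htail : ∫ t in Ioi T, min M (C * t ^ (-p)) ≤ C / (p - 1) * T ^ (1 - p) := by
    refine (setIntegral_mono_on (hint.mono_set subset_union_right) hint_tail measurableSet_Ioi
      fun t _ => min_le_right _ _).trans_eq ?_
    rw [integral_const_mul, integral_Ioi_rpow_of_lt (by linarith) hT,
      neg_add_eq_sub, neg_div, ← div_neg, neg_sub, mul_div_assoc', div_mul_eq_mul_div]
  linarith

lemma integral_Ioi_min_rpow_le_of_le_mul_rpow {h : ℝ → ℝ} {N ρ C p : ℝ} (hN : 0 < N)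
    (hC : 0 ≤ C) (hp : 1 < p) (hh_nonneg : ∀ t, 0 ≤ h t) (hh : ∀ t > 0, h t ≤ C * t ^ (-p)) :
    ∫ t in Ioi 0, min (N ^ (-ρ)) (h t) ≤ (1 + C / (p - 1)) * N ^ (ρ / p - ρ) := by
  have hM : 0 ≤ N ^ (-ρ) := Real.rpow_nonneg hN.le _
  have hmono : ∫ t in Ioi 0, min (N ^ (-ρ)) (h t) ≤
      ∫ t in Ioi 0, min (N ^ (-ρ)) (C * t ^ (-p)) := by
    refine integral_mono_of_nonneg (ae_of_all _ fun t => le_min hM (hh_nonneg t))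
      (integrableOn_Ioi_min_mul_rpow hM hC hp) ?_
    filter_upwards [ae_restrict_mem measurableSet_Ioi] with t ht
    exact min_le_min le_rfl (hh t ht)
  refine hmono.trans ((integral_Ioi_min_mul_rpow_le hM hC hp
    (Real.rpow_pos_of_pos hN (ρ / p))).trans_eq ?_)
  rw [← Real.rpow_add hN, ← Real.rpow_mul hN.le,
    show ρ / p * (1 - p) = ρ / p - ρ by field_simp, neg_add_eq_sub]
  ring

theorem summable_min_integral_of_intermittent_bounds_general
    (γ a D V : ℝ) (hγ : γ ∈ Ioo (0:ℝ) 1) (ha : 0 < a) (haγ : a < 1/2 - γ)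
    (hD : 0 < D) (hV : 0 < V)
    (g : ℝ → ℝ) (hg : ∀ x ∈ Ioo (0:ℝ) 1, g x ≤ V * x ^ (-γ))
    (ν : Measure ℝ)
    (hν : ν = (volume.restrict (Ioo (0:ℝ) 1)).withDensity (fun x => ENNReal.ofReal (g x)))
    (f : ℝ → ℝ)
    (hbound : ∀ x ∈ Ioo (0:ℝ) 1, f x ≤ D * x ^ (-a)) :
    Summable (fun k : ℕ =>
      ((k : ℝ) + 1) ^ (-(1/2) : ℝ) *
        ∫ t in Ioi (0:ℝ),
          min (((k : ℝ) + 1) ^ (-(1 - γ) / (2 * γ)))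
            (Real.sqrt ((ν {x ∈ Ioo (0:ℝ) 1 | f x > t}).toReal))) := by
  obtain ⟨hγ0, hγ1⟩ := hγ
  simp only [neg_div _ (1 - γ)]
  set p := (1 - γ) / (2 * a)
  set ρ := (1 - γ) / (2 * γ)
  set C := Real.sqrt (V / (1 - γ)) * D ^ p
  have hp : 1 < p := (one_lt_div (by linarith)).2 (by linarith)
  have htail : ∀ t > 0, Real.sqrt ((ν {x ∈ Ioo (0:ℝ) 1 | f x > t}).toReal) ≤ C * t ^ (-p) :=
    fun t ht => hν ▸ sqrt_withDensity_superlevelSet_le hγ1 ha hD hV.le hg hbound ht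
  have hexp : -(1/2) + (ρ / p - ρ) < -1 := by
    have hρp : -(1/2) + (ρ / p - ρ) = (2 * a - 1) / (2 * γ) := by
      have : 1 - γ ≠ 0 := by linarith
      simp only [p, ρ]
      field_simp
      ring
    rw [hρp, div_lt_iff₀ (by linarith)]
    linarith
  refine Summable.of_nonneg_of_le (fun k => ?_) (fun k => ?_)
    ((summable_nat_add_one_rpow hexp).mul_left (1 + C / (p - 1)))
  · exact mul_nonneg (by positivity)
      (integral_nonneg fun _ => le_min (by positivity) (Real.sqrt_nonneg _))
  · have hk : (0:ℝ) < k + 1 := by positivity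
    rw [Real.rpow_add hk, mul_left_comm]
    exact mul_le_mul_of_nonneg_left (integral_Ioi_min_rpow_le_of_le_mul_rpow hk (by positivity)
      hp (fun _ => Real.sqrt_nonneg _) htail) (by positivity)

theorem summable_min_integral_of_intermittent_bounds
    (γ a D V : ℝ) (hγ : γ ∈ Ioo (0:ℝ) 1) (ha : 0 < a) (haγ : a < 1/2 - γ)
    (hD : 0 < D) (hV : 0 < V)
    (g : ℝ → ℝ) (hg : ∀ x ∈ Ioo (0:ℝ) 1, g x ≤ V * x ^ (-γ))
    (ν : Measure ℝ) [IsProbabilityMeasure ν]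
    (hν : ν = (volume.restrict (Ioo (0:ℝ) 1)).withDensity (fun x => ENNReal.ofReal (g x)))
    (f : ℝ → ℝ) (hpos : ∀ x ∈ Ioo (0:ℝ) 1, 0 < f x)
    (hmono : ∀ x ∈ Ioo (0:ℝ) 1, ∀ y ∈ Ioo (0:ℝ) 1, x ≤ y → f y ≤ f x)
    (hbound : ∀ x ∈ Ioo (0:ℝ) 1, f x ≤ D * x ^ (-a)) :
    Summable (fun k : ℕ =>
      ((k : ℝ) + 1) ^ (-(1/2) : ℝ) *
        ∫ t in Ioi (0:ℝ),
          min (((k : ℝ) + 1) ^ (-(1 - γ) / (2 * γ)))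
            (Real.sqrt ((ν {x ∈ Ioo (0:ℝ) 1 | f x > t}).toReal))) :=
  summable_min_integral_of_intermittent_bounds_general γ a D V hγ ha haγ hD hV g hg ν hν f hbound
end

section
/- Let $(a_k)_{k\ge 0}$ be nonnegative reals and $\varepsilon_0$ a random variable in $L^r$ for some $r > 2$. If $\sum_{k\ge 0} k^{1/(r-1)} a_k^{(r-2)/(r-1)} < \infty$, then $\sum_{k\ge 0} \int_0^{a_k^2} \frac{Q_{|\varepsilon_0|}(u)}{\sqrt{u}}\,du < \infty$. -/
/-!
Write `Q` for the quantile function of `|ε₀|` and `N u = #{k | u < a_k²}`. Then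
`∑ₖ ∫₀^{a_k²} Q(u) u^{-1/2} du = ∫₀^∞ Q(u) · u^{-1/2} N(u) du`, and Hölder with exponents `r` and
`q = r/(r-1)` bounds this by `‖Q‖_r ‖u^{-1/2} N‖_q`. The first factor is at most `‖ε₀‖_r`:
`{u > 0 | t < Q u}` lies in `(0, P(|ε₀| > t))`, so the layer-cake formula compares the two
`r`-th moments. For the second, `n^q ≤ q ∑_{k<n} (k+1)^{q-1}` gives
`N(u)^q ≤ q ∑ₖ (k+1)^{q-1} 1_{u < a_k²}`, and integrating `u^{-q/2}` (integrable at `0` since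
`q < 2`) over `(0, a_k²)` leaves a multiple of `∑ₖ (k+1)^{1/(r-1)} a_k^{(r-2)/(r-1)}`.
-/

open MeasureTheory Set Filter Topology
open scoped ENNReal

section TailQuantile

variable {Ω : Type*} [MeasurableSpace Ω] (μ : Measure Ω) (X : Ω → ℝ)

noncomputable def tailQuantile (u : ℝ) : ℝ :=
  sInf {x : ℝ | 0 ≤ x ∧ μ.real {ω | x < X ω} ≤ u}

variable {μ X}

lemma tailQuantile_nonneg (u : ℝ) : 0 ≤ tailQuantile μ X u :=
  Real.sInf_nonneg fun _ hx => hx.1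

lemma tailQuantile_le {t u : ℝ} (ht : 0 ≤ t) (h : μ.real {ω | t < X ω} ≤ u) :
    tailQuantile μ X u ≤ t :=
  csInf_le ⟨0, fun _ hx => hx.1⟩ ⟨ht, h⟩

lemma exists_nat_measureReal_lt_le (hX : AEMeasurable X μ) {u : ℝ} (hu : 0 < u) :
    ∃ n : ℕ, μ.real {ω | (n : ℝ) < X ω} ≤ u := by
  by_cases hfin : ∃ n : ℕ, μ {ω | (n : ℝ) < X ω} ≠ ∞
  · have hempty : (⋂ n : ℕ, {ω | (n : ℝ) < X ω}) = ∅ :=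
      eq_empty_of_forall_notMem fun ω hω =>
        (exists_nat_ge (X ω)).elim fun n hn => (mem_iInter.1 hω n).not_ge hn
    have hlim := tendsto_measure_iInter_atTop (s := fun n : ℕ => {ω | (n : ℝ) < X ω})
      (fun _ => nullMeasurableSet_lt aemeasurable_const hX)
      (fun _ _ hmn _ hω => (Nat.cast_le.2 hmn).trans_lt (α := ℝ) hω) hfin
    rw [hempty, measure_empty] at hlim
    exact ((ENNReal.tendsto_toReal ENNReal.zero_ne_top).comp hlim
      |>.eventually_lt_const hu).exists.imp fun _ => le_of_lt
  -- every tail has infinite measure, so `μ.real` of it is the junk value `0`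
  · push Not at hfin
    exact ⟨0, by rw [Measure.real, hfin 0, ENNReal.toReal_top]; exact hu.le⟩

lemma antitoneOn_tailQuantile (hX : AEMeasurable X μ) : AntitoneOn (tailQuantile μ X) (Ioi 0) :=
  fun _ hu _ _ huv =>
    have ⟨n, hn⟩ := exists_nat_measureReal_lt_le hX hu
    csInf_le_csInf ⟨0, fun _ hx => hx.1⟩ ⟨n, n.cast_nonneg, hn⟩
      fun _ hx => ⟨hx.1, hx.2.trans huv⟩

lemma aemeasurable_tailQuantile (hX : AEMeasurable X μ) :
    AEMeasurable (tailQuantile μ X) (volume.restrict (Ioi 0)) :=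
  aemeasurable_restrict_of_antitoneOn measurableSet_Ioi (antitoneOn_tailQuantile hX)

lemma volume_lt_tailQuantile_le {t : ℝ} (ht : 0 ≤ t) :
    volume.restrict (Ioi 0) {u | t < tailQuantile μ X u} ≤ μ {ω | t < X ω} := by
  have hsub : {u | t < tailQuantile μ X u} ∩ Ioi 0 ⊆ Ioo 0 (μ.real {ω | t < X ω}) :=
    fun u ⟨hQu, hu⟩ => ⟨hu, lt_of_not_ge fun h => (tailQuantile_le ht h).not_gt hQu⟩
  calc volume.restrict (Ioi 0) {u | t < tailQuantile μ X u}
      ≤ volume (Ioo 0 (μ.real {ω | t < X ω})) :=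
        (Measure.restrict_apply' measurableSet_Ioi).trans_le (measure_mono hsub)
    _ ≤ μ {ω | t < X ω} := by
        rw [Real.volume_Ioo, sub_zero]; exact ENNReal.ofReal_toReal_le

lemma lintegral_tailQuantile_rpow_le (hX : AEMeasurable X μ) (hX0 : 0 ≤ᵐ[μ] X) {p : ℝ}
    (hp : 0 < p) :
    ∫⁻ u in Ioi 0, ENNReal.ofReal (tailQuantile μ X u ^ p) ≤
      ∫⁻ ω, ENNReal.ofReal (X ω ^ p) ∂μ := by
  rw [lintegral_rpow_eq_lintegral_meas_lt_mul _ (.of_forall tailQuantile_nonneg)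
    (aemeasurable_tailQuantile hX) hp, lintegral_rpow_eq_lintegral_meas_lt_mul μ hX0 hX hp]
  gcongr 1
  refine setLIntegral_mono' measurableSet_Ioi fun t (ht : 0 < t) => ?_
  gcongr
  exact volume_lt_tailQuantile_le ht.le

lemma lintegral_tailQuantile_abs_rpow_ne_top {p : ℝ} (hp : 0 < p)
    (hX : MemLp X (ENNReal.ofReal p) μ) :
    ∫⁻ u in Ioi 0, ENNReal.ofReal (tailQuantile μ (|X ·|) u) ^ p ≠ ∞ := by
  have hfin := lintegral_rpow_enorm_lt_top_of_eLpNorm_lt_top (by simpa using hp)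
    ENNReal.ofReal_ne_top hX.2
  simp_rw [ENNReal.toReal_ofReal hp.le, Real.enorm_eq_ofReal_abs,
    ENNReal.ofReal_rpow_of_nonneg (abs_nonneg _) hp.le] at hfin
  simp_rw [ENNReal.ofReal_rpow_of_nonneg (tailQuantile_nonneg _) hp.le]
  exact ne_top_of_le_ne_top hfin.ne (lintegral_tailQuantile_rpow_le
    hX.1.aemeasurable.abs (.of_forall fun _ => abs_nonneg _) hp)

end TailQuantile

lemma Real.rpow_sub_rpow_le_mul_sub {x y c : ℝ} (hx : 0 ≤ x) (hxy : x ≤ y) (hc : 1 ≤ c) :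
    y ^ c - x ^ c ≤ c * y ^ (c - 1) * (y - x) := by
  obtain rfl | hy := (hx.trans hxy).eq_or_lt
  · simp [le_antisymm hxy hx]
  have hbern := one_add_mul_self_le_rpow_one_add (s := x / y - 1)
    (by linarith [div_nonneg hx hy.le]) hc
  rw [add_sub_cancel, Real.div_rpow hx hy.le, le_div_iff₀ (by positivity)] at hbern
  have hyc : y ^ c = y ^ (c - 1) * y := by rw [← Real.rpow_add_one hy.ne', sub_add_cancel]
  have : y ^ c * (x / y - 1) = y ^ (c - 1) * (x - y) := by
    rw [hyc]; field_simp
  nlinarith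

open Finset in
lemma sum_range_rpow_le {c : ℝ} (hc : 1 ≤ c) {φ : ℕ → ℝ} (hφ0 : ∀ k, 0 ≤ φ k)
    (hφ1 : ∀ k, φ k ≤ 1) (n : ℕ) :
    (∑ k ∈ range n, φ k) ^ c ≤ c * ∑ k ∈ range n, ((k : ℝ) + 1) ^ (c - 1) * φ k := by
  induction n with
  | zero => simp [Real.zero_rpow (by linarith : c ≠ 0)]
  | succ n ih =>
    have hS0 : 0 ≤ ∑ k ∈ range n, φ k := sum_nonneg fun k _ => hφ0 k
    have hSn : ∑ k ∈ range n, φ k + φ n ≤ n + 1 := by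
      have : ∑ k ∈ range n, φ k ≤ n := (sum_le_sum fun k _ => hφ1 k).trans_eq (by simp)
      linarith [hφ1 n]
    have hstep := Real.rpow_sub_rpow_le_mul_sub hS0 (le_add_of_nonneg_right (hφ0 n)) hc
    have hpow : (∑ k ∈ range n, φ k + φ n) ^ (c - 1) ≤ ((n : ℝ) + 1) ^ (c - 1) :=
      Real.rpow_le_rpow (by linarith [hφ0 n]) hSn (by linarith)
    rw [add_sub_cancel_left] at hstep
    rw [sum_range_succ, sum_range_succ, mul_add]
    nlinarith [mul_le_mul_of_nonneg_left hpow (mul_nonneg (by linarith : (0 : ℝ) ≤ c) (hφ0 n))]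

open Finset in
lemma ENNReal.tsum_rpow_le {c : ℝ} (hc : 1 ≤ c) {χ : ℕ → ℝ≥0∞} (hχ : ∀ k, χ k ≤ 1) :
    (∑' k, χ k) ^ c ≤
      ENNReal.ofReal c * ∑' k : ℕ, ENNReal.ofReal (((k : ℝ) + 1) ^ (c - 1)) * χ k := by
  have hχ_ne_top (k : ℕ) : χ k ≠ ∞ := ((hχ k).trans_lt ENNReal.one_lt_top).ne
  have hpartial (n : ℕ) : (∑ k ∈ range n, χ k) ^ c ≤
      ENNReal.ofReal c * ∑ k ∈ range n, ENNReal.ofReal (((k : ℝ) + 1) ^ (c - 1)) * χ k := by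
    have hreal := sum_range_rpow_le hc (φ := fun k => (χ k).toReal)
      (fun _ => ENNReal.toReal_nonneg)
      (fun k => ENNReal.toReal_le_of_le_ofReal zero_le_one (by simpa using hχ k)) n
    have hofReal := ENNReal.ofReal_le_ofReal hreal
    rw [← ENNReal.ofReal_rpow_of_nonneg (sum_nonneg fun _ _ => ENNReal.toReal_nonneg)
        (by linarith),
      ENNReal.ofReal_mul (by linarith), ← ENNReal.toReal_sum fun k _ => hχ_ne_top k,
      ENNReal.ofReal_toReal (ENNReal.sum_ne_top.2 fun k _ => hχ_ne_top k),
      ENNReal.ofReal_sum_of_nonneg fun _ _ => by positivity] at hofReal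
    refine hofReal.trans_eq ?_
    congr 1
    refine sum_congr rfl fun k _ => ?_
    rw [ENNReal.ofReal_mul (by positivity), ENNReal.ofReal_toReal (hχ_ne_top k)]
  refine le_of_tendsto' ((ENNReal.continuous_rpow_const.tendsto _).comp
    (ENNReal.tendsto_nat_tsum χ)) fun n => (hpartial n).trans ?_
  gcongr
  exact ENNReal.sum_le_tsum _

section IndicatorSums

variable {α : Type*} [MeasurableSpace α] {ν : Measure α} {s : ℕ → Set α}

lemma tsum_setLIntegral_eq_lintegral_mul_tsum_indicator {f : α → ℝ≥0∞} (hf : AEMeasurable f ν)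
    (hs : ∀ k, MeasurableSet (s k)) :
    ∑' k, ∫⁻ x in s k, f x ∂ν = ∫⁻ x, f x * ∑' k, (s k).indicator 1 x ∂ν := by
  simp_rw [← lintegral_indicator (hs _), ← lintegral_tsum fun k => hf.indicator (hs k),
    ← ENNReal.tsum_mul_left]
  congr with x
  congr with k
  by_cases hx : x ∈ s k <;> simp [hx]

lemma lintegral_mul_tsum_indicator_rpow_le {c : ℝ} (hc : 1 ≤ c) {g : α → ℝ≥0∞}
    (hg : AEMeasurable g ν) (hs : ∀ k, MeasurableSet (s k)) :
    ∫⁻ x, (g x * ∑' k, (s k).indicator 1 x) ^ c ∂ν ≤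
      ENNReal.ofReal c * ∑' k : ℕ, ENNReal.ofReal (((k : ℝ) + 1) ^ (c - 1)) *
        ∫⁻ x in s k, g x ^ c ∂ν := by
  have hind (k : ℕ) (x : α) : (s k).indicator (1 : α → ℝ≥0∞) x ≤ 1 :=
    indicator_le_self' (fun _ _ => zero_le_one) x
  calc ∫⁻ x, (g x * ∑' k, (s k).indicator 1 x) ^ c ∂ν
      ≤ ∫⁻ x, g x ^ c * (ENNReal.ofReal c *
          ∑' k : ℕ, ENNReal.ofReal (((k : ℝ) + 1) ^ (c - 1)) * (s k).indicator 1 x) ∂ν := by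
        gcongr with x
        rw [ENNReal.mul_rpow_of_nonneg _ _ (by linarith)]
        gcongr
        exact ENNReal.tsum_rpow_le hc fun k => hind k x
    _ = ENNReal.ofReal c * ∑' k : ℕ, ENNReal.ofReal (((k : ℝ) + 1) ^ (c - 1)) *
          ∫⁻ x, (s k).indicator (fun x => g x ^ c) x ∂ν := by
        simp_rw [← lintegral_const_mul' _ _ ENNReal.ofReal_ne_top]
        rw [← lintegral_tsum fun k => ((hg.pow_const c).indicator (hs k)).const_mul _,
          ← lintegral_const_mul' _ _ ENNReal.ofReal_ne_top]
        congr with x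
        rw [mul_left_comm, ← ENNReal.tsum_mul_left]
        congr with k
        by_cases hx : x ∈ s k <;> simp [hx, mul_comm]
    _ = _ := by simp_rw [lintegral_indicator (hs _)]

end IndicatorSums

lemma lintegral_Ioo_zero_rpow {s b : ℝ} (hs : -1 < s) (hb : 0 ≤ b) :
    ∫⁻ u in Ioo 0 b, ENNReal.ofReal (u ^ s) = ENNReal.ofReal (b ^ (s + 1) / (s + 1)) := by
  have hint : IntegrableOn (fun u : ℝ => u ^ s) (Ioc 0 b) := by
    simpa [intervalIntegrable_iff, uIoc_of_le hb] using
      intervalIntegral.intervalIntegrable_rpow' (a := 0) (b := b) hs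
  rw [setLIntegral_congr Ioo_ae_eq_Ioc, ← ofReal_integral_eq_lintegral_ofReal hint
    ((ae_restrict_iff' measurableSet_Ioc).2 (.of_forall fun u hu => Real.rpow_nonneg hu.1.le s)),
    ← intervalIntegral.integral_of_le hb, integral_rpow (.inl hs),
    Real.zero_rpow (by linarith), sub_zero]

lemma summable_add_one_rpow_mul_of_summable {e : ℝ} (he : 0 ≤ e) {x : ℕ → ℝ}
    (hx : ∀ k, 0 ≤ x k) (h : Summable fun k : ℕ => (k : ℝ) ^ e * x k) :
    Summable fun k : ℕ => ((k : ℝ) + 1) ^ e * x k := by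
  refine (h.mul_left (2 ^ e)).of_norm_bounded_eventually_nat ?_
  filter_upwards [eventually_ge_atTop 1] with k hk
  have hk' : (1 : ℝ) ≤ k := by exact_mod_cast hk
  rw [Real.norm_of_nonneg (mul_nonneg (by positivity) (hx k)), ← mul_assoc,
    ← Real.mul_rpow zero_le_two (by linarith)]
  gcongr
  · exact hx k
  · linarith

lemma lintegral_rpow_mul_tsum_indicator_Ioo_ne_top {q s : ℝ} (hq : 1 ≤ q) (hs : -1 < s * q)
    {b : ℕ → ℝ} (hb : ∀ k, 0 ≤ b k)
    (hsum : Summable fun k : ℕ => ((k : ℝ) + 1) ^ (q - 1) * b k ^ (s * q + 1)) :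
    ∫⁻ u in Ioi 0, (ENNReal.ofReal (u ^ s) * ∑' k, (Ioo 0 (b k)).indicator 1 u) ^ q ≠ ∞ := by
  have hsq : 0 < s * q + 1 := by linarith
  have hterm (k : ℕ) :
      ENNReal.ofReal (((k : ℝ) + 1) ^ (q - 1)) * ∫⁻ u in Ioo 0 (b k), ENNReal.ofReal (u ^ s) ^ q =
        ENNReal.ofReal (((k : ℝ) + 1) ^ (q - 1) * b k ^ (s * q + 1) / (s * q + 1)) := by
    rw [mul_div_assoc, ENNReal.ofReal_mul (by positivity), ← lintegral_Ioo_zero_rpow hs (hb k)]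
    congr 1
    refine setLIntegral_congr_fun measurableSet_Ioo fun u hu => ?_
    rw [ENNReal.ofReal_rpow_of_nonneg (Real.rpow_nonneg hu.1.le s) (by linarith),
      ← Real.rpow_mul hu.1.le]
  refine ne_top_of_le_ne_top ?_ (lintegral_mul_tsum_indicator_rpow_le hq
    (measurable_id.pow_const s).ennreal_ofReal.aemeasurable fun k => measurableSet_Ioo)
  simp_rw [Measure.restrict_restrict_of_subset Ioo_subset_Ioi_self, hterm]
  rw [← ENNReal.ofReal_tsum_of_nonneg (fun k => div_nonneg (mul_nonneg (by positivity)
    (Real.rpow_nonneg (hb k) _)) hsq.le) (hsum.div_const _)]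
  exact ENNReal.mul_ne_top ENNReal.ofReal_ne_top ENNReal.ofReal_ne_top

lemma tsum_lintegral_Ioo_mul_rpow_ne_top {F : ℝ → ℝ≥0∞}
    (hF : AEMeasurable F (volume.restrict (Ioi 0))) {p q : ℝ} (hpq : p.HolderConjugate q)
    (hFp : ∫⁻ u in Ioi 0, F u ^ p ≠ ∞) {s : ℝ} (hs : -1 < s * q) {b : ℕ → ℝ}
    (hb : ∀ k, 0 ≤ b k)
    (hsum : Summable fun k : ℕ => ((k : ℝ) + 1) ^ (q - 1) * b k ^ (s * q + 1)) :
    ∑' k, ∫⁻ u in Ioo 0 (b k), F u * ENNReal.ofReal (u ^ s) ≠ ∞ := by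
  have hG : Measurable fun u : ℝ => ENNReal.ofReal (u ^ s) :=
    (measurable_id.pow_const s).ennreal_ofReal
  simp_rw [← Measure.restrict_restrict_of_subset (μ := volume) Ioo_subset_Ioi_self]
  rw [tsum_setLIntegral_eq_lintegral_mul_tsum_indicator (f := fun u => F u * _)
    (hF.mul hG.aemeasurable) fun k => measurableSet_Ioo]
  simp_rw [mul_assoc]
  refine ne_top_of_le_ne_top ?_ (ENNReal.lintegral_mul_le_Lp_mul_Lq _ hpq hF
    (hG.aemeasurable.mul (Measurable.tsum fun k =>
      measurable_const.indicator measurableSet_Ioo).aemeasurable))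
  exact ENNReal.mul_ne_top (ENNReal.rpow_ne_top_of_nonneg (by simp [hpq.nonneg]) hFp)
    (ENNReal.rpow_ne_top_of_nonneg (by simp [hpq.symm.nonneg])
      (lintegral_rpow_mul_tsum_indicator_Ioo_ne_top hpq.symm.lt.le hs hb hsum))

lemma integral_Ioo_div_sqrt_eq_toReal_lintegral {f : ℝ → ℝ} {b : ℝ} (hf0 : ∀ u, 0 ≤ f u)
    (hf : AEMeasurable f (volume.restrict (Ioo 0 b))) :
    ∫ u in Ioo 0 b, f u / √u =
      (∫⁻ u in Ioo 0 b, ENNReal.ofReal (f u) * ENNReal.ofReal (u ^ (-(1 / 2) : ℝ))).toReal := by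
  rw [integral_eq_lintegral_of_nonneg_ae
    (.of_forall fun u => div_nonneg (hf0 u) (Real.sqrt_nonneg u))
    (hf.div Real.continuous_sqrt.measurable.aemeasurable).aestronglyMeasurable]
  congr 1
  refine setLIntegral_congr_fun measurableSet_Ioo fun u hu => ?_
  rw [← ENNReal.ofReal_mul (hf0 u), Real.sqrt_eq_rpow, Real.rpow_neg hu.1.le, ← div_eq_mul_inv]

theorem summable_quantile_integral_of_summable_coeffs_general
    {Ω : Type*} [MeasurableSpace Ω] (μ : Measure Ω)
    (ε₀ : Ω → ℝ)
    (r : ℝ) (hr : 2 < r) (hεLr : MemLp ε₀ (ENNReal.ofReal r) μ)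
    (Q : ℝ → ℝ)
    (hQ : ∀ u, Q u = sInf {x : ℝ | 0 ≤ x ∧ (μ {ω | |ε₀ ω| > x}).toReal ≤ u})
    (a : ℕ → ℝ) (ha : ∀ k, 0 ≤ a k)
    (hsum : Summable (fun k : ℕ => (k : ℝ) ^ (1 / (r - 1)) * (a k) ^ ((r - 2) / (r - 1)))) :
    Summable (fun k : ℕ => ∫ u in Ioo (0:ℝ) ((a k) ^ 2), Q u / Real.sqrt u) := by
  obtain rfl : Q = tailQuantile μ (|ε₀ ·|) := funext hQ
  have hQ_meas := aemeasurable_tailQuantile hεLr.1.aemeasurable.abs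
  have hr1 : 0 < r - 1 := by linarith
  have hpq : r.HolderConjugate (r / (r - 1)) := .conjExponent (by linarith)
  have hexp (k : ℕ) :
      ((k : ℝ) + 1) ^ (r / (r - 1) - 1) * (a k ^ 2) ^ (-(1 / 2) * (r / (r - 1)) + 1) =
        ((k : ℝ) + 1) ^ (1 / (r - 1)) * a k ^ ((r - 2) / (r - 1)) := by
    rw [← Real.rpow_two, ← Real.rpow_mul (ha k)]
    congr 2 <;> field_simp <;> ring
  have hcoeff := summable_add_one_rpow_mul_of_summable (by positivity)
    (fun k => Real.rpow_nonneg (ha k) _) hsum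
  simp_rw [← hexp] at hcoeff
  have hfin := tsum_lintegral_Ioo_mul_rpow_ne_top hQ_meas.ennreal_ofReal hpq
    (lintegral_tailQuantile_abs_rpow_ne_top (by linarith) hεLr) (s := -(1 / 2))
    (by rw [neg_mul, neg_lt_neg_iff, one_div_mul_eq_div, div_lt_one two_pos, div_lt_iff₀ hr1]
        linarith)
    (fun k => sq_nonneg (a k)) hcoeff
  exact (ENNReal.summable_toReal hfin).congr fun k =>
    (integral_Ioo_div_sqrt_eq_toReal_lintegral tailQuantile_nonneg
      (hQ_meas.mono_measure (Measure.restrict_mono Ioo_subset_Ioi_self le_rfl))).symm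

theorem summable_quantile_integral_of_summable_coeffs
    {Ω : Type*} [MeasurableSpace Ω] (μ : Measure Ω) [IsProbabilityMeasure μ]
    (ε₀ : Ω → ℝ) (hε : Measurable ε₀)
    (r : ℝ) (hr : 2 < r) (hεLr : MemLp ε₀ (ENNReal.ofReal r) μ)
    (Q : ℝ → ℝ)
    (hQ : ∀ u, Q u = sInf {x : ℝ | 0 ≤ x ∧ (μ {ω | |ε₀ ω| > x}).toReal ≤ u})
    (a : ℕ → ℝ) (ha : ∀ k, 0 ≤ a k)
    (hsum : Summable (fun k : ℕ => (k : ℝ) ^ (1 / (r - 1)) * (a k) ^ ((r - 2) / (r - 1)))) :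
    Summable (fun k : ℕ => ∫ u in Ioo (0:ℝ) ((a k) ^ 2), Q u / Real.sqrt u) :=
  summable_quantile_integral_of_summable_coeffs_general μ ε₀ r hr hεLr Q hQ a ha hsum
end
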